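/- The tree-width of a finite graph G equals the minimum elimination width over all linear orders of V(G): tw(G) = min_{L} (ω(G_L) − 1), where G_L is the fill-in of G with respect to L. -/

import Mathlib

open SimpleGraph

variable {V : Type} [Fintype V]

/-- `G` has a tree-decomposition of width at most `k`: a finite tree `T` with
bags `X t` covering all vertices and edges, such that every vertex induces a
connected subtree, and every bag has at most `k+1` vertices. -/
def HasTreeDecompOfWidthLE (G : SimpleGraph V) (k : ℕ) : Prop :=
  ∃ (ι : Type) (_ : Fintype ι) (T : SimpleGraph ι) (X : ι → Finset V),
    T.IsTree ∧
    (∀ v : V, ∃ t, v ∈ X t) ∧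
    (∀ u v : V, G.Adj u v → ∃ t, u ∈ X t ∧ v ∈ X t) ∧
    (∀ v : V, (T.induce {t | v ∈ X t}).Connected) ∧
    (∀ t, (X t).card ≤ k + 1)

/-- The tree-width of a finite graph. -/
noncomputable def treewidth (G : SimpleGraph V) : ℕ :=
  sInf {k | HasTreeDecompOfWidthLE G k}

variable {V : Type} [Fintype V]

/-- `u` is strongly reachable (any length) from `v`: a path from `v` to `u`
whose internal vertices are all strictly greater than `v`. -/
def StrongRel (G : SimpleGraph V) (L : LinearOrder V) (v u : V) : Prop :=
  ∃ p : G.Walk v u, p.IsPath ∧ ∀ x ∈ p.support, x ≠ u → x ≠ v → L.lt v x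

/-- The fill-in of `G` with respect to a linear order `L`: each vertex is made
adjacent to all smaller vertices reachable by a path with internal vertices
greater than it. -/
def fillIn (G : SimpleGraph V) (L : LinearOrder V) : SimpleGraph V where
  Adj u w := u ≠ w ∧ ((L.lt u w ∧ StrongRel G L w u) ∨ (L.lt w u ∧ StrongRel G L u w))
  symm := by
    constructor
    intro u w h
    exact ⟨h.1.symm, h.2.symm⟩
  loopless := by constructor; intro u h; exact h.1 rfl


/-!
A linear order `L` yields a tree decomposition of `G`: hang every vertex `v` below its largest
lower neighbour in the fill-in `G_L`, and take as bag of `v` the vertex together with its lower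
neighbours. Fill-in paths through `v` show that these neighbours form a clique, so the width is
`ω(G_L) - 1`. Conversely, root a tree decomposition of width `k` at `r` and order the vertices by
the depth of the highest bag containing them. If `u < w` are adjacent in `G_L`, the fill path from
`w` to `u` runs through vertices that occur only in the subtree below the highest bag of `w` until
it meets that bag, so `u` lies in it; hence every clique of `G_L` sits in one bag.
-/

namespace SimpleGraph

variable {α : Type*} {T : SimpleGraph α}

lemma Preconnected.exists_walk_support_subset {S : Set α} (hS : (T.induce S).Preconnected)
    {a b : α} (ha : a ∈ S) (hb : b ∈ S) : ∃ q : T.Walk a b, ∀ x ∈ q.support, x ∈ S := by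
  obtain ⟨q⟩ := hS ⟨a, ha⟩ ⟨b, hb⟩
  refine ⟨(q.map (Embedding.induce S).toHom : T.Walk a b), fun x hx => ?_⟩
  replace hx : x ∈ (q.map (Embedding.induce S).toHom).support := hx
  rw [Walk.support_map, List.mem_map] at hx
  obtain ⟨⟨y, hy⟩, -, rfl⟩ := hx
  exact hy

lemma connected_of_forall_exists_adj_lt [Preorder α] [Finite α] (c : α)
    (h : ∀ a ≠ c, ∃ b < a, T.Adj a b) : T.Connected := by
  have hreach : ∀ a, T.Reachable a c := by
    intro a
    induction a using WellFoundedLT.induction with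
    | _ a ih =>
      by_cases hac : a = c
      · exact hac ▸ Reachable.refl a
      · obtain ⟨b, hba, hab⟩ := h a hac
        exact hab.reachable.trans (ih b hba)
  have : Nonempty α := ⟨c⟩
  exact ⟨fun a b => (hreach a).trans (hreach b).symm⟩

lemma isTree_fromRel_of_lt [Preorder α] [Finite α] (r : α) (p : α → α)
    (hp : ∀ a ≠ r, p a < a) : (fromRel fun a b => a ≠ r ∧ b = p a).IsTree := by
  set T := fromRel fun a b => a ≠ r ∧ b = p a
  have hadj : ∀ a ≠ r, T.Adj a (p a) := fun a ha =>
    (fromRel_adj _ _ _).2 ⟨(hp a ha).ne', Or.inl ⟨ha, rfl⟩⟩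
  let edge : {a // a ≠ r} → T.edgeSet := fun a => ⟨s(a, p a), hadj a a.2⟩
  have hedge : Function.Bijective edge := by
    constructor
    · rintro ⟨a, ha⟩ ⟨b, hb⟩ hab
      rcases Sym2.eq_iff.1 (congrArg Subtype.val hab) with ⟨rfl, -⟩ | ⟨hab, hba⟩
      · rfl
      · have hb' := hp a ha
        have ha' := hp b hb
        rw [hba] at hb'
        rw [← hab] at ha'
        exact absurd (hb'.trans ha') (lt_irrefl b)
    · rintro ⟨e, he⟩
      induction e using Sym2.ind with
      | _ a b =>
        rw [mem_edgeSet, fromRel_adj] at he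
        rcases he.2 with ⟨ha, rfl⟩ | ⟨hb, rfl⟩
        · exact ⟨⟨a, ha⟩, rfl⟩
        · exact ⟨⟨b, hb⟩, Subtype.ext Sym2.eq_swap⟩
  rw [isTree_iff_connected_and_card, ← Nat.card_eq_of_bijective edge hedge]
  refine ⟨connected_of_forall_exists_adj_lt r fun a ha => ⟨p a, hp a ha, hadj a ha⟩, ?_⟩
  classical
  have := Fintype.ofFinite α
  simp only [Nat.card_eq_fintype_card, Fintype.card_subtype_compl, Fintype.card_unique]
  have : 0 < Fintype.card α := Fintype.card_pos_iff.2 ⟨r⟩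
  omega

lemma Walk.IsPath.append {a b c : α} {p : T.Walk a b} {q : T.Walk b c} (hp : p.IsPath)
    (hq : q.IsPath) (h : ∀ x ∈ p.support, x ∈ q.support → x = b) : (p.append q).IsPath := by
  rw [Walk.isPath_def, Walk.support_append, List.nodup_append]
  refine ⟨hp.support_nodup, hq.support_nodup.sublist (List.tail_sublist _), ?_⟩
  rintro x hxp y hyq rfl
  obtain rfl := h x hxp (List.mem_of_mem_tail hyq)
  have hnodup := hq.support_nodup
  rw [← Walk.cons_tail_support] at hnodup
  exact (List.nodup_cons.1 hnodup).1 hyq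

lemma Walk.dist_add_dist_le_length {a b x : α} (q : T.Walk a b) (hx : x ∈ q.support) :
    T.dist a x + T.dist x b ≤ q.length := by
  classical
  calc T.dist a x + T.dist x b ≤ (q.takeUntil x hx).length + (q.dropUntil x hx).length :=
        add_le_add (dist_le _) (dist_le _)
    _ = q.length := by rw [← Walk.length_append, q.take_spec hx]

/-- Every walk from `r` to `s` passes through `t`: in a tree rooted at `r`, `s` is a descendant
of `t`. -/
def IsBelow (T : SimpleGraph α) (r t s : α) : Prop :=
  ∀ q : T.Walk r s, t ∈ q.support

lemma IsBelow.forall_or_mem {S : Set α} (hS : (T.induce S).Preconnected) {r t s : α}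
    (hs : s ∈ S) (h : T.IsBelow r t s) : (∀ s' ∈ S, T.IsBelow r t s') ∨ t ∈ S := by
  refine or_iff_not_imp_right.2 fun ht s' hs' q => ?_
  obtain ⟨W, hW⟩ := hS.exists_walk_support_subset hs' hs
  have := h (q.append W)
  rw [Walk.mem_support_append_iff] at this
  exact this.resolve_right fun htW => ht (hW t htW)

lemma IsBelow.eq_of_dist_le (hT : T.Connected) {r t s : α} (h : T.IsBelow r t s)
    (hd : T.dist r s ≤ T.dist r t) : t = s := by
  obtain ⟨q, hq⟩ := hT.exists_walk_length_eq_dist r s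
  have := q.dist_add_dist_le_length (h q)
  exact hT.dist_eq_zero_iff.1 (by omega)

lemma IsTree.isBelow_of_forall_dist_le (hT : T.IsTree) {S : Set α}
    (hS : (T.induce S).Preconnected) {r t : α} (ht : t ∈ S)
    (hmin : ∀ s ∈ S, T.dist r t ≤ T.dist r s) {s : α} (hs : s ∈ S) : T.IsBelow r t s := by
  classical
  intro q
  obtain ⟨Q, hQ, hQlen⟩ := hT.connected.exists_path_of_dist r t
  obtain ⟨P, hP⟩ := hS.exists_walk_support_subset ht hs
  -- Vertices of the geodesic `Q` other than `t` are closer to `r` than `t`; those of `P` are not.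
  have hmeet : ∀ y ∈ Q.support, y ∈ P.bypass.support → y = t := by
    intro y hyQ hyP
    have h1 := hmin y (hP y (P.support_bypass_subset_support hyP))
    have h2 := Q.dist_add_dist_le_length hyQ
    exact hT.connected.dist_eq_zero_iff.1 (by omega)
  have hq : q.bypass = Q.append P.bypass :=
    (hT.existsUnique_path r s).unique q.bypass_isPath (hQ.append P.bypass_isPath hmeet)
  apply q.support_bypass_subset_support
  rw [hq, Walk.mem_support_append_iff]
  exact Or.inl Q.end_mem_support

lemma Walk.end_mem_union_of_forall_adj {G : SimpleGraph α} {I B : Set α}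
    (hIB : ∀ a b, a ∈ I → G.Adj a b → b ∈ I ∪ B) {v u : α} (p : G.Walk v u) (hv : v ∈ I)
    (hp : ∀ x ∈ p.support, x ≠ u → x ∈ B → x ∈ I) : u ∈ I ∪ B := by
  induction p with
  | nil => exact Or.inl hv
  | @cons a b u hab q ih =>
    have hq : ∀ x ∈ q.support, x ≠ u → x ∈ B → x ∈ I := fun x hx =>
      hp x (List.mem_cons_of_mem _ hx)
    rcases hIB a b hv hab with hb | hb
    · exact ih hb hq
    · by_cases hbu : b = u
      · exact hbu ▸ Or.inr hb
      · exact ih (hp b (List.mem_cons_of_mem _ q.start_mem_support) hbu hb) hq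

end SimpleGraph

open SimpleGraph

lemma HasTreeDecompOfWidthLE.mono {α : Type} {G H : SimpleGraph α} {k k' : ℕ} (hGH : G ≤ H)
    (hk : k ≤ k') (h : HasTreeDecompOfWidthLE H k) : HasTreeDecompOfWidthLE G k' := by
  obtain ⟨ι, hι, T, X, hT, hcover, hedge, hconn, hcard⟩ := h
  exact ⟨ι, hι, T, X, hT, hcover, fun u v huv => hedge u v (hGH huv), hconn,
    fun t => (hcard t).trans (by omega)⟩

section Elimination

variable {α : Type} [L : LinearOrder α] {G : SimpleGraph α}

lemma fillIn_adj_iff_of_lt {u w : α} (huw : u < w) :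
    (fillIn G L).Adj u w ↔ ∃ p : G.Walk w u, ∀ x ∈ p.support, x ≠ u → x ≠ w → w < x := by
  classical
  constructor
  · rintro ⟨-, ⟨-, p, -, hp⟩ | ⟨hwu, -⟩⟩
    · exact ⟨p, hp⟩
    · exact absurd hwu huw.not_gt
  · rintro ⟨p, hp⟩
    exact ⟨huw.ne, Or.inl ⟨huw, p.bypass, p.bypass_isPath,
      fun x hx => hp x (p.support_bypass_subset_support hx)⟩⟩

lemma le_fillIn : G ≤ fillIn G L := by
  intro u w huw
  wlog h : u < w generalizing u w
  · exact (this huw.symm ((not_lt.1 h).lt_of_ne huw.ne.symm)).symm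
  refine (fillIn_adj_iff_of_lt h).2 ⟨huw.symm.toWalk, fun x hx hxu hxw => ?_⟩
  simp [hxu, hxw] at hx

lemma isClique_fillIn_lower (v : α) :
    (fillIn G L).IsClique {u | u < v ∧ (fillIn G L).Adj u v} := by
  intro a ha b hb hab
  wlog hlt : a < b generalizing a b
  · exact (this hb ha hab.symm ((not_lt.1 hlt).lt_of_ne hab.symm)).symm
  obtain ⟨hav, ha⟩ := ha
  obtain ⟨hbv, hb⟩ := hb
  -- Both fill paths leave `v` through vertices above `v > b`; joined at `v` they link `b` to `a`.
  obtain ⟨p, hp⟩ := (fillIn_adj_iff_of_lt hav).1 ha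
  obtain ⟨q, hq⟩ := (fillIn_adj_iff_of_lt hbv).1 hb
  refine (fillIn_adj_iff_of_lt hlt).2 ⟨q.reverse.append p, fun x hx hxa hxb => ?_⟩
  rw [Walk.mem_support_append_iff, Walk.support_reverse, List.mem_reverse] at hx
  by_cases hxv : x = v
  · exact hxv ▸ hbv
  · rcases hx with hx | hx
    · exact hbv.trans (hq x hx hxb hxv)
    · exact hbv.trans (hp x hx hxa hxv)

lemma cliqueNum_le_of_forall_lt_adj {H : SimpleGraph α} {B : α → Finset α} {n : ℕ}
    (hcard : ∀ v, (B v).card ≤ n) (hself : ∀ v, v ∈ B v)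
    (hlt : ∀ u v, u < v → H.Adj u v → u ∈ B v) : H.cliqueNum ≤ n := by
  obtain ⟨s, hs⟩ := H.exists_isNClique_cliqueNum
  rw [← hs.card_eq]
  rcases s.eq_empty_or_nonempty with rfl | hne
  · exact Nat.zero_le _
  refine (Finset.card_le_card fun u hu => ?_).trans (hcard (s.max' hne))
  rcases (s.le_max' u hu).lt_or_eq with h | h
  · exact hlt u _ h (hs.isClique hu (s.max'_mem hne) h.ne)
  · exact h ▸ hself _

end Elimination

section EliminationTree

variable {α : Type} [Fintype α] [LinearOrder α] (H : SimpleGraph α)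

open Classical in
noncomputable def lowerNbhd (v : α) : Finset α := {u | u < v ∧ H.Adj u v}

/-- `Finset.max` is `⊥` when `v` has no lower neighbour, so `⊥` is the root. -/
noncomputable def elimParent : WithBot α → WithBot α :=
  WithBot.recBotCoe ⊥ fun v => (lowerNbhd H v).max

noncomputable def elimBag : WithBot α → Finset α :=
  WithBot.recBotCoe ∅ fun v => insert v (lowerNbhd H v)

variable {H}

@[simp]
lemma mem_lowerNbhd {u v : α} : u ∈ lowerNbhd H v ↔ u < v ∧ H.Adj u v := by
  simp [lowerNbhd]

lemma elimParent_lt {a : WithBot α} (ha : a ≠ ⊥) : elimParent H a < a := by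
  obtain ⟨v, rfl⟩ := WithBot.ne_bot_iff_exists.1 ha
  rw [elimParent, WithBot.recBotCoe_coe, Finset.max_eq_sup_coe,
    Finset.sup_lt_iff (WithBot.bot_lt_coe v)]
  exact fun u hu => WithBot.coe_lt_coe.2 (mem_lowerNbhd.1 hu).1

lemma isClique_elimBag (hH : ∀ v, H.IsClique {u | u < v ∧ H.Adj u v}) (a : WithBot α) :
    H.IsClique (elimBag H a : Set α) := by
  induction a using WithBot.recBotCoe with
  | bot => simp [elimBag]
  | coe v =>
    rw [elimBag, WithBot.recBotCoe_coe, Finset.coe_insert]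
    refine (hH v).subset (fun u hu => mem_lowerNbhd.1 hu) |>.insert fun u hu _ => ?_
    exact (mem_lowerNbhd.1 hu).2.symm

lemma mem_elimBag_elimParent (hH : ∀ v, H.IsClique {u | u < v ∧ H.Adj u v}) {u : α}
    {a : WithBot α} (hu : u ∈ elimBag H a) (hau : a ≠ u) : u ∈ elimBag H (elimParent H a) := by
  induction a using WithBot.recBotCoe with
  | bot => simp [elimBag] at hu
  | coe v =>
    rw [elimBag, WithBot.recBotCoe_coe, Finset.mem_insert] at hu
    have huv : u ∈ lowerNbhd H v := hu.resolve_left fun h => hau (congrArg _ h.symm)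
    obtain ⟨w, hw⟩ := Finset.max_of_mem huv
    have hwv := mem_lowerNbhd.1 (Finset.mem_of_max hw)
    rw [elimParent, WithBot.recBotCoe_coe, hw, elimBag, WithBot.recBotCoe_coe,
      Finset.mem_insert, mem_lowerNbhd]
    rcases (WithBot.coe_le_coe.1 (hw ▸ Finset.le_max huv)).lt_or_eq with huw | huw
    · exact Or.inr ⟨huw, hH v (mem_lowerNbhd.1 huv) hwv huw.ne⟩
    · exact Or.inl huw

end EliminationTree

theorem hasTreeDecompOfWidthLE_of_isClique_lower {α : Type} [Fintype α] [LinearOrder α]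
    {H : SimpleGraph α} (hH : ∀ v, H.IsClique {u | u < v ∧ H.Adj u v}) :
    HasTreeDecompOfWidthLE H (H.cliqueNum - 1) := by
  have hne : ∀ {a : WithBot α} {u : α}, u ∈ elimBag H a → a ≠ ⊥ := by
    rintro _ u hu rfl
    simp [elimBag] at hu
  refine ⟨WithBot α, inferInstance, fromRel fun a b => a ≠ ⊥ ∧ b = elimParent H a, elimBag H,
    isTree_fromRel_of_lt ⊥ _ fun a ha => elimParent_lt ha, fun v => ⟨v, by simp [elimBag]⟩,
    fun u v huv => ?_, fun u => ?_, fun a => ?_⟩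
  · wlog h : u < v generalizing u v
    · obtain ⟨t, ht⟩ := this v u huv.symm ((not_lt.1 h).lt_of_ne huv.ne.symm)
      exact ⟨t, ht.symm⟩
    exact ⟨v, by simp [elimBag, h, huv]⟩
  · refine connected_of_forall_exists_adj_lt (⟨u, by simp [elimBag]⟩ : {a | u ∈ elimBag H a}) ?_
    rintro ⟨a, ha⟩ hau
    have hlt : elimParent H a < a := elimParent_lt (hne ha)
    refine ⟨⟨elimParent H a, mem_elimBag_elimParent hH ha fun h => hau (Subtype.ext h)⟩, hlt,
      induce_adj.2 ((fromRel_adj _ _ _).2 ⟨hlt.ne', Or.inl ⟨hne ha, rfl⟩⟩)⟩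
  · have := (isClique_elimBag hH a).card_le_cliqueNum
    omega

theorem mem_bag_top_of_fillIn_adj {α : Type} {ι : Type*} [L : LinearOrder α]
    {G : SimpleGraph α} {T : SimpleGraph ι} {X : ι → Finset α} {r : ι} {top : α → ι}
    (hT : T.IsTree) (hedge : ∀ a b, G.Adj a b → ∃ s, a ∈ X s ∧ b ∈ X s)
    (hconn : ∀ a, (T.induce {s | a ∈ X s}).Preconnected) (htop : ∀ a, a ∈ X (top a))
    (hmin : ∀ a s, a ∈ X s → T.dist r (top a) ≤ T.dist r s)
    (hmono : ∀ a b, a < b → T.dist r (top a) ≤ T.dist r (top b))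
    {u w : α} (huw : u < w) (hadj : (fillIn G L).Adj u w) : u ∈ X (top w) := by
  set t := top w
  set I : Set α := {z | ∀ s, z ∈ X s → T.IsBelow r t s}
  have mem_I : ∀ z ∈ X t, T.dist r t ≤ T.dist r (top z) → z ∈ I := fun z hz hd _ hs =>
    hT.isBelow_of_forall_dist_le (hconn z) hz (fun s' hs' => hd.trans (hmin z s' hs')) hs
  have hw : w ∈ I := mem_I w (htop w) le_rfl
  have hclosed : ∀ a b, a ∈ I → G.Adj a b → b ∈ I ∪ X t := by
    intro a b ha hab
    obtain ⟨s, hsa, hsb⟩ := hedge a b hab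
    exact (ha s hsa).forall_or_mem (hconn b) hsb
  obtain ⟨p, hp⟩ := (fillIn_adj_iff_of_lt huw).1 hadj
  have hinner : ∀ x ∈ p.support, x ≠ u → x ∈ X t → x ∈ I := fun x hx hxu hxt =>
    if hxw : x = w then hxw ▸ hw else mem_I x hxt (hmono w x (hp x hx hxu hxw))
  rcases p.end_mem_union_of_forall_adj hclosed hw hinner with hu | hu
  · rw [(hu (top u) (htop u)).eq_of_dist_le hT.connected (hmono u w huw)]
    exact htop u
  · exact hu

lemma exists_linearOrder_lt_imp_le {α β : Type*} [LinearOrder β] (f : α → β) :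
    ∃ L : LinearOrder α, ∀ a b, L.lt a b → f a ≤ f b := by
  let : LinearOrder α := IsWellOrder.linearOrder WellOrderingRel
  have hg : Function.Injective fun a => toLex (f a, a) := fun a b h =>
    (Prod.ext_iff.1 (toLex.injective h)).2
  refine ⟨LinearOrder.lift' _ hg, fun a b hab => ?_⟩
  rcases Prod.Lex.toLex_lt_toLex.1 hab with h | ⟨h, -⟩
  · exact h.le
  · exact h.le

theorem HasTreeDecompOfWidthLE.exists_cliqueNum_fillIn_le {α : Type} {G : SimpleGraph α}
    {k : ℕ} (h : HasTreeDecompOfWidthLE G k) :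
    ∃ L : LinearOrder α, (fillIn G L).cliqueNum ≤ k + 1 := by
  obtain ⟨ι, hι, T, X, hT, hcover, hedge, hconn, hcard⟩ := h
  obtain ⟨r⟩ := hT.connected.nonempty
  choose top htop hmin using fun v =>
    Set.exists_min_image {s | v ∈ X s} (T.dist r) (Set.toFinite _) (hcover v)
  obtain ⟨L, hL⟩ := exists_linearOrder_lt_imp_le fun v => T.dist r (top v)
  exact ⟨L, cliqueNum_le_of_forall_lt_adj (fun v => hcard (top v)) htop fun u w huw hadj =>
    mem_bag_top_of_fillIn_adj hT hedge (fun v => (hconn v).preconnected) htop hmin hL huw hadj⟩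

theorem hasTreeDecompOfWidthLE_iff {α : Type} [Fintype α] {G : SimpleGraph α} {k : ℕ} :
    HasTreeDecompOfWidthLE G k ↔ ∃ L : LinearOrder α, (fillIn G L).cliqueNum - 1 ≤ k := by
  refine ⟨fun h => ?_, fun ⟨L, hL⟩ => ?_⟩
  · obtain ⟨L, hL⟩ := h.exists_cliqueNum_fillIn_le
    exact ⟨L, by omega⟩
  · exact (hasTreeDecompOfWidthLE_of_isClique_lower isClique_fillIn_lower).mono le_fillIn hL

/-- The tree-width of `G` equals the minimum elimination width over all linear
orders: `tw(G) = min_L (ω(G_L) − 1)`, where `G_L` is the fill-in and `ω` the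
clique number. -/
theorem treewidth_eq_min_elimination_width (G : SimpleGraph V) :
    treewidth G = sInf {m | ∃ L : LinearOrder V, m = (fillIn G L).cliqueNum - 1} := by
  set S := {m | ∃ L : LinearOrder V, m = (fillIn G L).cliqueNum - 1}
  obtain ⟨L, hL⟩ := Nat.sInf_mem (s := S) ⟨_, IsWellOrder.linearOrder WellOrderingRel, rfl⟩
  have hmin : HasTreeDecompOfWidthLE G (sInf S) := hasTreeDecompOfWidthLE_iff.2 ⟨L, hL.ge⟩
  obtain ⟨L', hL'⟩ := hasTreeDecompOfWidthLE_iff.1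
    (Nat.sInf_mem (s := {k | HasTreeDecompOfWidthLE G k}) ⟨_, hmin⟩)
  exact le_antisymm (Nat.sInf_le hmin) ((Nat.sInf_le (s := S) ⟨L', rfl⟩).trans hL')
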